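/- Let Γ be a group, G a topological group, and f : Γ → G a map such that the subgroup of G generated by f(Γ) is dense in G. Then the topological closure of the subgroup of G generated by the defect set D_f is a normal subgroup of G. -/

import Mathlib

/-- The defect set of a map `f : Γ → G`:
`D_f = { f(y)⁻¹ f(x)⁻¹ f(xy) : x, y ∈ Γ }`. -/
def defectSet {Γ G : Type*} [Group Γ] [Group G] (f : Γ → G) : Set G :=
  {d | ∃ x y : Γ, d = (f y)⁻¹ * (f x)⁻¹ * f (x * y)}

/-!
Write `d(x, y) = f(y)⁻¹ f(x)⁻¹ f(xy)`. Expanding `f(xya)` in two ways gives the identity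
`f(a)⁻¹ d(x, y) f(a) = d(y, a) d(x, ya) d(xy, a)⁻¹`, so every `f(a)` normalizes the subgroup `N`
generated by the defects (for conjugation by `f(a)` itself, use also `f(a) f(a⁻¹) ∈ N`).
Normalizing passes to the closure `K` of `N`, and the normalizer of the closed subgroup `K` is
closed; it contains the dense subgroup generated by `f(Γ)`, so it is all of `G`.
-/

namespace Subgroup

variable {G : Type*} [Group G]

theorem mem_normalizer_of_conj_mem {H : Subgroup G} {g : G}
    (hconj : ∀ h ∈ H, g * h * g⁻¹ ∈ H) (hconj_inv : ∀ h ∈ H, g⁻¹ * h * g ∈ H) :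
    g ∈ normalizer (H : Set G) :=
  mem_normalizer_iff.2 fun h => ⟨hconj h, fun hh => by simpa [mul_assoc] using hconj_inv _ hh⟩

variable [TopologicalSpace G] [IsTopologicalGroup G]

theorem isClosed_normalizer {K : Subgroup G} (hK : IsClosed (K : Set G)) :
    IsClosed (normalizer (K : Set G) : Set G) := by
  have hnormalizer : (normalizer (K : Set G) : Set G) =
      ⋂ k ∈ K, (fun g => g * k * g⁻¹) ⁻¹' K ∩ (fun g => g⁻¹ * k * g) ⁻¹' K := by
    ext g
    simp only [Set.mem_iInter, Set.mem_inter_iff, Set.mem_preimage, SetLike.mem_coe]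
    exact ⟨fun hg k hk => ⟨(mem_normalizer_iff.1 hg k).1 hk, (mem_normalizer_iff''.1 hg k).1 hk⟩,
      fun h => mem_normalizer_of_conj_mem (fun k hk => (h k hk).1) (fun k hk => (h k hk).2)⟩
  rw [hnormalizer]
  exact isClosed_biInter fun k _ => (hK.preimage (by fun_prop)).inter (hK.preimage (by fun_prop))

theorem normalizer_le_normalizer_topologicalClosure (N : Subgroup G) :
    normalizer (N : Set G) ≤ normalizer (N.topologicalClosure : Set G) := fun g hg =>
  mem_normalizer_of_conj_mem
    (fun _ hk => map_mem_closure (f := fun h => g * h * g⁻¹) (by fun_prop) hk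
      fun n hn => (mem_normalizer_iff.1 hg n).1 hn)
    (fun _ hk => map_mem_closure (f := fun h => g⁻¹ * h * g) (by fun_prop) hk
      fun n hn => (mem_normalizer_iff''.1 hg n).1 hn)

theorem topologicalClosure_normal_of_dense_normalizer (N : Subgroup G)
    (hN : Dense (normalizer (N : Set G) : Set G)) : N.topologicalClosure.Normal := by
  refine normalizer_eq_top_iff.1 (eq_top_iff.2 fun g _ => ?_)
  exact (isClosed_normalizer N.isClosed_topologicalClosure).closure_subset
    (hN.mono (normalizer_le_normalizer_topologicalClosure N) g)

end Subgroup

section Defect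

variable {Γ G : Type*} [Group Γ] [Group G] (f : Γ → G)

def defect (x y : Γ) : G := (f y)⁻¹ * (f x)⁻¹ * f (x * y)

theorem defect_mem_closure_defectSet (x y : Γ) :
    defect f x y ∈ Subgroup.closure (defectSet f) :=
  Subgroup.subset_closure ⟨x, y, rfl⟩

theorem inv_mul_defect_mul (a x y : Γ) :
    (f a)⁻¹ * defect f x y * f a =
      defect f y a * defect f x (y * a) * (defect f (x * y) a)⁻¹ := by
  simp only [defect, mul_assoc x y a]
  group

theorem defect_mul_defect_one_one (a : Γ) :
    defect f a a⁻¹ * defect f 1 1 = (f a⁻¹)⁻¹ * (f a)⁻¹ := by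
  simp [defect, mul_assoc]

theorem inv_mul_mul_mem_closure_defectSet (a : Γ) {n : G}
    (hn : n ∈ Subgroup.closure (defectSet f)) :
    (f a)⁻¹ * n * f a ∈ Subgroup.closure (defectSet f) := by
  have hle : Subgroup.closure (defectSet f) ≤
      (Subgroup.closure (defectSet f)).comap (MulAut.conj (f a)⁻¹).toMonoidHom := by
    refine (Subgroup.closure_le _).2 ?_
    rintro _ ⟨x, y, rfl⟩
    simp only [SetLike.mem_coe, Subgroup.mem_comap, MulEquiv.coe_toMonoidHom,
      MulAut.conj_apply, inv_inv]
    change (f a)⁻¹ * defect f x y * f a ∈ _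
    rw [inv_mul_defect_mul]
    exact mul_mem (mul_mem (defect_mem_closure_defectSet f y a)
      (defect_mem_closure_defectSet f x (y * a)))
      (inv_mem (defect_mem_closure_defectSet f (x * y) a))
  simpa using hle hn

theorem mul_mul_inv_mem_closure_defectSet (a : Γ) {n : G}
    (hn : n ∈ Subgroup.closure (defectSet f)) :
    f a * n * (f a)⁻¹ ∈ Subgroup.closure (defectSet f) := by
  have hm : (f a⁻¹)⁻¹ * (f a)⁻¹ ∈ Subgroup.closure (defectSet f) := by
    rw [← defect_mul_defect_one_one]
    exact mul_mem (defect_mem_closure_defectSet f _ _) (defect_mem_closure_defectSet f _ _)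
  have hconj : f a * n * (f a)⁻¹ = ((f a⁻¹)⁻¹ * (f a)⁻¹)⁻¹ * ((f a⁻¹)⁻¹ * n * f a⁻¹) *
      ((f a⁻¹)⁻¹ * (f a)⁻¹) := by
    group
  rw [hconj]
  exact mul_mem (mul_mem (inv_mem hm) (inv_mul_mul_mem_closure_defectSet f a⁻¹ hn)) hm

theorem range_subset_normalizer_closure_defectSet :
    Set.range f ⊆ Subgroup.normalizer (Subgroup.closure (defectSet f) : Set G) := by
  rintro _ ⟨a, rfl⟩
  exact Subgroup.mem_normalizer_of_conj_mem (fun _ => mul_mul_inv_mem_closure_defectSet f a)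
    (fun _ => inv_mul_mul_mem_closure_defectSet f a)

end Defect

/-- If the subgroup generated by the image of `f` is dense in `G`, then the topological
closure of the subgroup generated by the defect set is normal in `G`. -/
theorem defect_group_closure_normal {Γ G : Type*} [Group Γ] [Group G]
    [TopologicalSpace G] [IsTopologicalGroup G] (f : Γ → G)
    (hdense : Dense ((Subgroup.closure (Set.range f) : Subgroup G) : Set G)) :
    ((Subgroup.closure (defectSet f)).topologicalClosure).Normal :=
  Subgroup.topologicalClosure_normal_of_dense_normalizer _ <|
    hdense.mono ((Subgroup.closure_le _).2 (range_subset_normalizer_closure_defectSet f))
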